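/- Let K be a finite nonempty type and, for each k ∈ K, let d k and e k be finite nonempty types with |d k| = d_k, and let ω k ∈ Matrix (e k) (e k) ℂ be a positive definite state. Let ι := Σ k, (d k × e k) and define the linear map P : Matrix ι ι ℂ →ₗ[ℂ] Matrix ι ι ℂ by P(ρ) := blockDiagonal' (fun k => (tr₂ρ_k) ⊗ₖ ω k), where ρ_k is the k-th diagonal block of ρ and tr₂ρ_k ∈ Matrix (d k) (d k) ℂ is its partial trace over e k. Then the Holevo quantity of P equals log(Σ_k d_k): the supremum, over all m : ℕ, all probability vectors p : Fin m → ℝ and all states ρ_x ∈ Matrix ι ι ℂ, of H(P(Σ_x p x • ρ_x)) − Σ_x p x · H(P(ρ_x)), is equal to Real.log (Σ_k d_k). -/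

import Mathlib

open scoped ComplexOrder Kronecker

/-- The von Neumann entropy of a (positive semidefinite) matrix. -/
noncomputable def vNEntropy {n : Type*} [Fintype n] [DecidableEq n]
    (ρ : Matrix n n ℂ) : ℝ :=
  (Matrix.trace (cfc Real.negMulLog ρ)).re

/-- The peripheral projection onto `⊕_k M_{d k} ⊗ ω k`: it maps `ρ` to the block-diagonal
matrix whose `k`-th block is `(tr₂ ρ_k) ⊗ₖ ω k`, where `ρ_k` is the `k`-th diagonal block of
`ρ` and `tr₂` is the partial trace over `e k`. -/
noncomputable def periphProj {K : Type*} [Fintype K] [DecidableEq K]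
    (d e : K → Type*) [∀ k, Fintype (d k)] [∀ k, DecidableEq (d k)]
    [∀ k, Fintype (e k)] [∀ k, DecidableEq (e k)]
    (ω : ∀ k, Matrix (e k) (e k) ℂ) :
    Matrix (Σ k, d k × e k) (Σ k, d k × e k) ℂ →ₗ[ℂ]
      Matrix (Σ k, d k × e k) (Σ k, d k × e k) ℂ where
  toFun ρ := Matrix.blockDiagonal' fun k =>
    (Matrix.of fun a a' => ∑ b : e k, ρ ⟨k, (a, b)⟩ ⟨k, (a', b)⟩) ⊗ₖ ω k
  map_add' ρ ρ' := by
    have h : ∀ k, (Matrix.of fun a a' => ∑ b : e k, (ρ + ρ') ⟨k, (a, b)⟩ ⟨k, (a', b)⟩) =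
        (Matrix.of fun a a' => ∑ b : e k, ρ ⟨k, (a, b)⟩ ⟨k, (a', b)⟩) +
        (Matrix.of fun a a' => ∑ b : e k, ρ' ⟨k, (a, b)⟩ ⟨k, (a', b)⟩) := by
      intro k; ext a a'
      simp [Matrix.add_apply, Finset.sum_add_distrib]
    simp only [h, Matrix.add_kronecker]
    exact Matrix.blockDiagonal'_add _ _
  map_smul' c ρ := by
    have h : ∀ k, (Matrix.of fun a a' => ∑ b : e k, (c • ρ) ⟨k, (a, b)⟩ ⟨k, (a', b)⟩) =
        c • (Matrix.of fun a a' => ∑ b : e k, ρ ⟨k, (a, b)⟩ ⟨k, (a', b)⟩) := by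
      intro k; ext a a'
      simp [Matrix.smul_apply, Finset.mul_sum]
    simp only [h, Matrix.smul_kronecker, RingHom.id_apply]
    exact Matrix.blockDiagonal'_smul (R := ℂ) c _

section HelperLemmas
open Matrix Polynomial

theorem cfc_unitary_conj {n : Type*} [Fintype n] [DecidableEq n] (f : ℝ → ℝ) (V : Matrix n n ℂ)
    (hV : V ∈ Matrix.unitaryGroup n ℂ) (E : n → ℝ) :
    cfc f (V * Matrix.diagonal (fun i => (E i : ℂ)) * Vᴴ)
      = V * Matrix.diagonal (fun i => (f (E i) : ℂ)) * Vᴴ := by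
  classical
  have hstarV : Vᴴ = star V := rfl
  have hdsa : ∀ g : n → ℝ, _root_.IsSelfAdjoint (Matrix.diagonal (fun i => (g i : ℂ))) := by
    intro g
    rw [_root_.IsSelfAdjoint]
    ext i j
    by_cases h : i = j
    · subst h; simp [Matrix.star_apply, Matrix.diagonal_apply_eq]
    · simp [Matrix.star_apply, Matrix.diagonal_apply_ne _ h,
        Matrix.diagonal_apply_ne _ (Ne.symm h)]
  set A := V * Matrix.diagonal (fun i => (E i : ℂ)) * Vᴴ with hA
  have hsa : _root_.IsSelfAdjoint A := by
    rw [hA, hstarV]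
    exact (hdsa E).conjugate V
  have hconj : ∀ B : Matrix n n ℂ, spectrum ℂ (V * B * Vᴴ) = spectrum ℂ B := by
    intro B
    have := Unitary.spectrum_star_right_conjugate (R := ℂ)
      (U := (⟨V, hV⟩ : Matrix.unitaryGroup n ℂ)) (a := B)
    rw [← this]
    rfl
  have hspec : spectrum ℝ A ⊆ Set.range E := by
    intro x hx
    rw [← spectrum.algebraMap_mem_iff ℂ, hA, hconj, spectrum_diagonal] at hx
    obtain ⟨i, hi⟩ := hx
    exact ⟨i, Complex.ofReal_injective hi⟩
  set s : Finset ℝ := Finset.image E Finset.univ with hs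
  set p : ℝ[X] := Lagrange.interpolate s id f with hp
  have hnode : ∀ i : n, p.eval (E i) = f (E i) := by
    intro i
    have hmem : E i ∈ s := Finset.mem_image_of_mem E (Finset.mem_univ i)
    exact Lagrange.eval_interpolate_at_node f (Set.injOn_id _) hmem
  have h1 : cfc f A = cfc p.eval A := by
    apply cfc_congr
    intro x hx
    obtain ⟨i, rfl⟩ := hspec hx
    exact (hnode i).symm
  rw [h1, cfc_polynomial p A hsa]
  have hVV : Vᴴ * V = 1 := by
    rw [← star_eq_conjTranspose]; exact (Matrix.mem_unitaryGroup_iff'.mp hV)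
  have hVV' : V * Vᴴ = 1 := by
    rw [← star_eq_conjTranspose]; exact (Matrix.mem_unitaryGroup_iff.mp hV)
  let φ : Matrix n n ℂ →ₐ[ℝ] Matrix n n ℂ :=
  { toFun := fun M => V * M * Vᴴ
    map_one' := show V * (1 : Matrix n n ℂ) * Vᴴ = 1 by rw [mul_one, hVV']
    map_mul' := fun M N => show V * (M * N) * Vᴴ = (V * M * Vᴴ) * (V * N * Vᴴ) by
      simp only [Matrix.mul_assoc]
      rw [← Matrix.mul_assoc Vᴴ V, hVV, Matrix.one_mul]
    map_zero' := show V * (0 : Matrix n n ℂ) * Vᴴ = 0 by simp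
    map_add' := fun M N => show V * (M + N) * Vᴴ = V * M * Vᴴ + V * N * Vᴴ by
      rw [Matrix.mul_add, Matrix.add_mul]
    commutes' := fun r => show V * (algebraMap ℝ (Matrix n n ℂ) r) * Vᴴ = _ by
      simp only [Algebra.algebraMap_eq_smul_one]
      rw [Matrix.mul_smul, mul_one, Matrix.smul_mul, hVV'] }
  have hφ : ∀ M, φ M = V * M * Vᴴ := fun _ => rfl
  have h2 : aeval A p = φ (aeval (Matrix.diagonal (fun i => (E i : ℂ))) p) := by
    rw [← aeval_algHom_apply, hφ, hA]
  rw [h2, hφ]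
  let ψ : (n → ℂ) →ₐ[ℝ] Matrix n n ℂ :=
  { toFun := fun d => Matrix.diagonal d
    map_one' := Matrix.diagonal_one
    map_mul' := fun a b => show Matrix.diagonal (a * b) = Matrix.diagonal a * Matrix.diagonal b by
      rw [Matrix.diagonal_mul_diagonal]; rfl
    map_zero' := Matrix.diagonal_zero
    map_add' := fun a b => show Matrix.diagonal (a + b) = Matrix.diagonal a + Matrix.diagonal b by
      rw [Matrix.diagonal_add]; rfl
    commutes' := fun r => show Matrix.diagonal (algebraMap ℝ (n → ℂ) r) = _ by
      simp only [Algebra.algebraMap_eq_smul_one]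
      rw [← Matrix.diagonal_one, ← Matrix.diagonal_smul]
      rfl }
  have hψ : ∀ d, ψ d = Matrix.diagonal d := fun _ => rfl
  have h3 : aeval (Matrix.diagonal (fun i => (E i : ℂ))) p
      = Matrix.diagonal (aeval (fun i => (E i : ℂ)) p) := by
    rw [← hψ, aeval_algHom_apply, hψ]
  rw [h3]
  have h6 : (aeval (fun i => (E i : ℂ)) p) = fun i => ((f (E i) : ℂ)) := by
    funext i
    have h4 := aeval_algHom_apply (Pi.evalAlgHom ℝ (fun _ => ℂ) i) (fun j => (E j : ℂ)) p
    have h5 : aeval ((E i : ℂ)) p = ((p.eval (E i) : ℝ) : ℂ) := by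
      rw [show ((E i : ℂ)) = algebraMap ℝ ℂ (E i) from rfl,
        aeval_algebraMap_apply_eq_algebraMap_eval]
      simp
    have : aeval ((E i : ℂ)) p = (aeval (fun j => (E j : ℂ)) p) i := h4
    rw [← this, h5, hnode i]
  rw [h6]

theorem trace_unitary_conj {n : Type*} [Fintype n] [DecidableEq n] (V : Matrix n n ℂ)
    (hV : V ∈ Matrix.unitaryGroup n ℂ) (c : n → ℂ) :
    (V * Matrix.diagonal c * Vᴴ).trace = ∑ i, c i := by
  rw [Matrix.trace_mul_cycle, ← Matrix.star_eq_conjTranspose,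
    Matrix.mem_unitaryGroup_iff'.mp hV, Matrix.one_mul, Matrix.trace_diagonal]

theorem re_trace_unitary_conj {n : Type*} [Fintype n] [DecidableEq n] (V : Matrix n n ℂ)
    (hV : V ∈ Matrix.unitaryGroup n ℂ) (E : n → ℝ) :
    (V * Matrix.diagonal (fun i => (E i : ℂ)) * Vᴴ).trace.re = ∑ i, E i := by
  rw [trace_unitary_conj V hV, Complex.re_sum]
  simp

theorem vNEntropy_unitary_conj {n : Type*} [Fintype n] [DecidableEq n] (V : Matrix n n ℂ)
    (hV : V ∈ Matrix.unitaryGroup n ℂ) (E : n → ℝ) :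
    vNEntropy (V * Matrix.diagonal (fun i => (E i : ℂ)) * Vᴴ)
      = ∑ i, Real.negMulLog (E i) := by
  rw [vNEntropy, cfc_unitary_conj Real.negMulLog V hV E, re_trace_unitary_conj V hV]

theorem kron_conjTranspose {m n : Type*} [Fintype m] [Fintype n]
    (A : Matrix m m ℂ) (B : Matrix n n ℂ) : (A ⊗ₖ B)ᴴ = Aᴴ ⊗ₖ Bᴴ := by
  ext ⟨i, j⟩ ⟨i', j'⟩
  simp [Matrix.conjTranspose_apply, Matrix.kroneckerMap_apply]

theorem kron_mem_unitaryGroup {m n : Type*} [Fintype m] [Fintype n] [DecidableEq m] [DecidableEq n]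
    {A : Matrix m m ℂ} {B : Matrix n n ℂ} (hA : A ∈ Matrix.unitaryGroup m ℂ)
    (hB : B ∈ Matrix.unitaryGroup n ℂ) : A ⊗ₖ B ∈ Matrix.unitaryGroup (m × n) ℂ := by
  rw [Matrix.mem_unitaryGroup_iff'] at *
  rw [Matrix.star_eq_conjTranspose, kron_conjTranspose, ← Matrix.mul_kronecker_mul]
  rw [← Matrix.star_eq_conjTranspose, ← Matrix.star_eq_conjTranspose, hA, hB,
    Matrix.one_kronecker_one]

theorem blockDiagonal'_mem_unitaryGroup {K : Type*} [Fintype K] [DecidableEq K]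
    {m : K → Type*} [∀ k, Fintype (m k)] [∀ k, DecidableEq (m k)]
    {U : ∀ k, Matrix (m k) (m k) ℂ} (hU : ∀ k, U k ∈ Matrix.unitaryGroup (m k) ℂ) :
    Matrix.blockDiagonal' U ∈ Matrix.unitaryGroup (Σ k, m k) ℂ := by
  rw [Matrix.mem_unitaryGroup_iff']
  rw [Matrix.star_eq_conjTranspose, Matrix.blockDiagonal'_conjTranspose,
    ← Matrix.blockDiagonal'_mul]
  have h : (fun k => (U k)ᴴ * U k) = fun k => (1 : Matrix (m k) (m k) ℂ) := by
    funext k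
    rw [← Matrix.star_eq_conjTranspose]
    exact Matrix.mem_unitaryGroup_iff'.mp (hU k)
  rw [h]
  exact Matrix.blockDiagonal'_one

theorem posSemidef_smul_real {n : Type*} [Fintype n] {A : Matrix n n ℂ} (hA : A.PosSemidef)
    {c : ℝ} (hc : 0 ≤ c) : (c • A).PosSemidef := by
  constructor
  · ext i j
    simp only [Matrix.conjTranspose_apply, Matrix.smul_apply, star_smul, star_trivial]
    rw [← Matrix.conjTranspose_apply, hA.1.eq]
  · intro x
    exact (hA.smul hc).2 x

end HelperLemmas
open Matrix
section Aux
variable {K : Type*} [Fintype K] [DecidableEq K]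
    (d e : K → Type*) [∀ k, Fintype (d k)] [∀ k, DecidableEq (d k)]
    [∀ k, Fintype (e k)] [∀ k, DecidableEq (e k)]

noncomputable def pTr (ρ : Matrix (Σ k, d k × e k) (Σ k, d k × e k) ℂ) (k : K) :
    Matrix (d k) (d k) ℂ :=
  Matrix.of fun a a' => ∑ b : e k, ρ ⟨k, (a, b)⟩ ⟨k, (a', b)⟩

theorem periphProj_apply (ω : ∀ k, Matrix (e k) (e k) ℂ)
    (ρ : Matrix (Σ k, d k × e k) (Σ k, d k × e k) ℂ) :
    periphProj d e ω ρ = Matrix.blockDiagonal' (fun k => pTr d e ρ k ⊗ₖ ω k) := rfl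

theorem vN_periphProj (ω : ∀ k, Matrix (e k) (e k) ℂ)
    (ρ : Matrix (Σ k, d k × e k) (Σ k, d k × e k) ℂ)
    (U : ∀ k, Matrix (d k) (d k) ℂ) (hU : ∀ k, U k ∈ Matrix.unitaryGroup (d k) ℂ)
    (μ : ∀ k, d k → ℝ)
    (hdec : ∀ k, pTr d e ρ k = U k * Matrix.diagonal (fun a => (μ k a : ℂ)) * (U k)ᴴ)
    (W : ∀ k, Matrix (e k) (e k) ℂ) (hW : ∀ k, W k ∈ Matrix.unitaryGroup (e k) ℂ)
    (ν : ∀ k, e k → ℝ)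
    (hWdec : ∀ k, ω k = W k * Matrix.diagonal (fun b => (ν k b : ℂ)) * (W k)ᴴ) :
    vNEntropy (periphProj d e ω ρ)
      = ∑ k, ∑ a, ∑ b, Real.negMulLog (μ k a * ν k b) := by
  have hblock : ∀ k, pTr d e ρ k ⊗ₖ ω k
      = (U k ⊗ₖ W k)
        * Matrix.diagonal (fun ab : d k × e k => ((μ k ab.1 * ν k ab.2 : ℝ) : ℂ))
        * (U k ⊗ₖ W k)ᴴ := by
    intro k
    calc pTr d e ρ k ⊗ₖ ω k
        = (U k * Matrix.diagonal (fun a => (μ k a : ℂ)) * (U k)ᴴ)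
            ⊗ₖ (W k * Matrix.diagonal (fun b => (ν k b : ℂ)) * (W k)ᴴ) := by
          rw [hdec k, hWdec k]
      _ = ((U k * Matrix.diagonal (fun a => (μ k a : ℂ)))
            ⊗ₖ (W k * Matrix.diagonal (fun b => (ν k b : ℂ)))) * ((U k)ᴴ ⊗ₖ (W k)ᴴ) :=
          Matrix.mul_kronecker_mul _ _ _ _
      _ = ((U k ⊗ₖ W k) * ((Matrix.diagonal (fun a => (μ k a : ℂ)))
            ⊗ₖ (Matrix.diagonal (fun b => (ν k b : ℂ))))) * ((U k)ᴴ ⊗ₖ (W k)ᴴ) := by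
          rw [Matrix.mul_kronecker_mul]
      _ = (U k ⊗ₖ W k)
            * Matrix.diagonal (fun ab : d k × e k => ((μ k ab.1 * ν k ab.2 : ℝ) : ℂ))
            * (U k ⊗ₖ W k)ᴴ := by
          rw [Matrix.diagonal_kronecker_diagonal, kron_conjTranspose]
          congr 2
          funext ab
          push_cast
          rfl
  rw [periphProj_apply,
    show (fun k => pTr d e ρ k ⊗ₖ ω k)
      = (fun k => (U k ⊗ₖ W k)
          * Matrix.diagonal (fun ab : d k × e k => ((μ k ab.1 * ν k ab.2 : ℝ) : ℂ))
          * (U k ⊗ₖ W k)ᴴ) from funext hblock,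
    Matrix.blockDiagonal'_mul, Matrix.blockDiagonal'_mul,
    ← Matrix.blockDiagonal'_conjTranspose, Matrix.blockDiagonal'_diagonal]
  rw [vNEntropy_unitary_conj _
    (blockDiagonal'_mem_unitaryGroup (fun k => kron_mem_unitaryGroup (hU k) (hW k)))]
  rw [← Finset.univ_sigma_univ, Finset.sum_sigma]
  exact Finset.sum_congr rfl fun k _ => Fintype.sum_prod_type _

end Aux
theorem posSemidef_sum {n ι : Type*} [Fintype n] (s : Finset ι) (F : ι → Matrix n n ℂ)
    (h : ∀ i ∈ s, (F i).PosSemidef) : (∑ i ∈ s, F i).PosSemidef := by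
  classical
  induction s using Finset.induction_on with
  | empty => simpa using Matrix.PosSemidef.zero
  | insert _ _ hx ih =>
    rw [Finset.sum_insert hx]
    exact (h _ (Finset.mem_insert_self _ _)).add
      (ih fun i hi => h i (Finset.mem_insert_of_mem hi))

theorem sum_negMulLog_le_log_card {I : Type*} [Fintype I] [Nonempty I] (w : I → ℝ)
    (hw : ∀ i, 0 ≤ w i) (h1 : ∑ i, w i = 1) :
    ∑ i, Real.negMulLog (w i) ≤ Real.log (Fintype.card I) := by
  classical
  have hD0 : 0 < (Fintype.card I : ℝ) := by exact_mod_cast Fintype.card_pos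
  have hsum : ∑ _i : I, ((Fintype.card I : ℝ))⁻¹ = 1 := by
    rw [Finset.sum_const, Finset.card_univ, nsmul_eq_mul, mul_inv_cancel₀ (ne_of_gt hD0)]
  have hjensen := Real.concaveOn_negMulLog.le_map_sum (t := Finset.univ)
    (w := fun _ : I => ((Fintype.card I : ℝ))⁻¹) (p := w) (fun i _ => by positivity)
    hsum (fun i _ => hw i)
  have hmean : ∑ i, ((Fintype.card I : ℝ))⁻¹ • w i = ((Fintype.card I : ℝ))⁻¹ := by
    rw [← Finset.smul_sum, h1, smul_eq_mul, mul_one]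
  rw [hmean] at hjensen
  have h2 : ∑ i, ((Fintype.card I : ℝ))⁻¹ • Real.negMulLog (w i)
      = ((Fintype.card I : ℝ))⁻¹ * ∑ i, Real.negMulLog (w i) := by
    rw [← Finset.smul_sum]; rfl
  rw [h2] at hjensen
  have h3 : Real.negMulLog ((Fintype.card I : ℝ))⁻¹
      = ((Fintype.card I : ℝ))⁻¹ * Real.log (Fintype.card I) := by
    rw [Real.negMulLog, Real.log_inv]; ring
  rw [h3] at hjensen
  have := mul_le_mul_of_nonneg_left hjensen (le_of_lt hD0)
  rw [← mul_assoc, ← mul_assoc, mul_inv_cancel₀ (ne_of_gt hD0), one_mul, one_mul] at this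
  exact this

theorem expand_sum_negMulLog {A B : Type*} [Fintype A] [Fintype B]
    (μ : A → ℝ) (ν : B → ℝ) (hν1 : ∑ b, ν b = 1) :
    ∑ a, ∑ b, Real.negMulLog (μ a * ν b)
      = ∑ a, Real.negMulLog (μ a) + (∑ a, μ a) * (∑ b, Real.negMulLog (ν b)) := by
  have h : ∀ a, ∑ b, Real.negMulLog (μ a * ν b)
      = Real.negMulLog (μ a) + μ a * (∑ b, Real.negMulLog (ν b)) := by
    intro a
    simp only [Real.negMulLog_mul, Finset.sum_add_distrib, ← Finset.sum_mul, ← Finset.mul_sum]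
    rw [hν1]
    ring
  rw [Finset.sum_congr rfl fun a _ => h a, Finset.sum_add_distrib, ← Finset.sum_mul]

section Aux2
variable {K : Type*} [Fintype K] [DecidableEq K]
    (d e : K → Type*) [∀ k, Fintype (d k)] [∀ k, DecidableEq (d k)]
    [∀ k, Fintype (e k)] [∀ k, DecidableEq (e k)]

set_option linter.unusedSectionVars false

theorem pTr_posSemidef {ρ : Matrix (Σ k, d k × e k) (Σ k, d k × e k) ℂ}
    (hρ : ρ.PosSemidef) (k : K) : (pTr d e ρ k).PosSemidef := by
  classical
  have hrep : pTr d e ρ k = ∑ b : e k,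
      (Matrix.of fun a (j : Σ k, d k × e k) => if j = ⟨k, (a, b)⟩ then (1 : ℂ) else 0) * ρ *
      (Matrix.of fun a (j : Σ k, d k × e k) => if j = ⟨k, (a, b)⟩ then (1 : ℂ) else 0)ᴴ := by
    ext a a'
    rw [Matrix.sum_apply]
    refine Finset.sum_congr rfl fun b _ => ?_
    simp only [Matrix.mul_apply, Matrix.conjTranspose_apply, Matrix.of_apply]
    simp [pTr]
  rw [hrep]
  exact posSemidef_sum _ _ fun b _ => hρ.mul_mul_conjTranspose_same _

theorem sum_trace_pTr (ρ : Matrix (Σ k, d k × e k) (Σ k, d k × e k) ℂ) :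
    ∑ k, (pTr d e ρ k).trace = ρ.trace := by
  rw [Matrix.trace, ← Finset.univ_sigma_univ, Finset.sum_sigma]
  refine Finset.sum_congr rfl fun k _ => ?_
  rw [Matrix.trace]
  simp [pTr, Matrix.diag, Fintype.sum_prod_type]

theorem pTr_sum_smul {m : ℕ} (p : Fin m → ℝ)
    (ρ : Fin m → Matrix (Σ k, d k × e k) (Σ k, d k × e k) ℂ) (k : K) :
    pTr d e (∑ x, p x • ρ x) k = ∑ x, p x • pTr d e (ρ x) k := by
  ext a a'
  simp only [pTr, Matrix.of_apply, Matrix.sum_apply, Matrix.smul_apply, Finset.smul_sum]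
  exact Finset.sum_comm

end Aux2
section EnsembleAux
variable {K : Type*} [Fintype K] [DecidableEq K]
    (d e : K → Type*) [∀ k, Fintype (d k)] [∀ k, DecidableEq (d k)]
    [∀ k, Fintype (e k)] [∀ k, DecidableEq (e k)]

set_option linter.unusedSectionVars false

/-- the pure state concentrated at index `j`. -/
noncomputable def pureAt (j : Σ k, d k × e k) : Matrix (Σ k, d k × e k) (Σ k, d k × e k) ℂ :=
  Matrix.diagonal (fun j' => if j' = j then (1 : ℂ) else 0)

theorem pureAt_posSemidef (j : Σ k, d k × e k) : (pureAt d e j).PosSemidef :=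
  Matrix.PosSemidef.diagonal (fun j' => by dsimp only; split <;> simp)

theorem pureAt_trace (j : Σ k, d k × e k) : (pureAt d e j).trace = 1 := by
  rw [pureAt, Matrix.trace_diagonal]
  simp

theorem pTr_pureAt (t : Σ k, d k) (b₀ : ∀ k, e k) (k : K) :
    pTr d e (pureAt d e ⟨t.1, (t.2, b₀ t.1)⟩) k
      = Matrix.diagonal (fun a =>
          ((if (⟨k, a⟩ : Σ k, d k) = t then (1 : ℝ) else 0 : ℝ) : ℂ)) := by
  obtain ⟨k₀, a₀⟩ := t
  ext a a'
  by_cases haa : a = a'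
  · subst haa
    rw [Matrix.diagonal_apply_eq]
    show ∑ b : e k, pureAt d e ⟨k₀, (a₀, b₀ k₀)⟩ ⟨k, (a, b)⟩ ⟨k, (a, b)⟩ = _
    simp only [pureAt, Matrix.diagonal_apply_eq]
    by_cases hk : k = k₀
    · subst hk
      by_cases ha : a = a₀
      · subst ha
        simp [Sigma.mk.inj_iff]
      · simp [Sigma.mk.inj_iff, ha]
    · simp [Sigma.mk.inj_iff, hk]
  · rw [Matrix.diagonal_apply_ne _ haa]
    show ∑ b : e k, pureAt d e ⟨k₀, (a₀, b₀ k₀)⟩ ⟨k, (a, b)⟩ ⟨k, (a', b)⟩ = 0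
    refine Finset.sum_eq_zero fun b _ => Matrix.diagonal_apply_ne _ ?_
    simp [Sigma.mk.inj_iff, haa]

theorem pTr_sum_smul' {ι : Type*} [Fintype ι] (p : ι → ℝ)
    (ρ : ι → Matrix (Σ k, d k × e k) (Σ k, d k × e k) ℂ) (k : K) :
    pTr d e (∑ x, p x • ρ x) k = ∑ x, p x • pTr d e (ρ x) k := by
  ext a a'
  simp only [pTr, Matrix.of_apply, Matrix.sum_apply, Matrix.smul_apply, Finset.smul_sum]
  exact Finset.sum_comm

theorem pTr_mix (b₀ : ∀ k, e k) (c : ℝ) (k : K) :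
    pTr d e (∑ t : Σ k, d k, c • pureAt d e ⟨t.1, (t.2, b₀ t.1)⟩) k
      = Matrix.diagonal (fun _ : d k => (c : ℂ)) := by
  have h0 := pTr_sum_smul' d e (fun _ : Σ k, d k => c)
    (fun t => pureAt d e ⟨t.1, (t.2, b₀ t.1)⟩) k
  rw [h0]
  have h1 : ∀ t : Σ k, d k, c • pTr d e (pureAt d e ⟨t.1, (t.2, b₀ t.1)⟩) k
      = Matrix.diagonal (fun a => (c : ℂ) *
          (if (⟨k, a⟩ : Σ k, d k) = t then (1 : ℂ) else 0)) := by
    intro t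
    rw [pTr_pureAt d e t b₀ k]
    ext a a'
    by_cases haa : a = a'
    · subst haa
      rw [Matrix.smul_apply, Matrix.diagonal_apply_eq, Matrix.diagonal_apply_eq]
      push_cast
      split <;> simp [Complex.real_smul]
    · rw [Matrix.smul_apply, Matrix.diagonal_apply_ne _ haa, Matrix.diagonal_apply_ne _ haa,
        smul_zero]
  rw [Finset.sum_congr rfl fun t _ => h1 t]
  ext a a'
  rw [Matrix.sum_apply]
  by_cases haa : a = a'
  · subst haa
    simp only [Matrix.diagonal_apply_eq]
    rw [← Finset.mul_sum]
    simp
  · simp only [Matrix.diagonal_apply_ne _ haa]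
    simp

end EnsembleAux
set_option maxHeartbeats 1000000 in
/-- The Holevo quantity of the peripheral projection `P` onto `⊕_k M_{d k} ⊗ ω k`
equals `log (∑_k d_k)`: the supremum over all finite ensembles `{p_x, ρ_x}` of
`H(P(∑_x p_x ρ_x)) − ∑_x p_x H(P(ρ_x))` is `log (∑_k |d k|)`. -/
theorem holevo_periphProj
    {K : Type*} [Fintype K] [DecidableEq K] [Nonempty K]
    (d e : K → Type*) [∀ k, Fintype (d k)] [∀ k, DecidableEq (d k)] [∀ k, Nonempty (d k)]
    [∀ k, Fintype (e k)] [∀ k, DecidableEq (e k)] [∀ k, Nonempty (e k)]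
    (ω : ∀ k, Matrix (e k) (e k) ℂ)
    (hω : ∀ k, (ω k).PosDef) (hωtr : ∀ k, (ω k).trace = 1) :
    IsLUB
      { r : ℝ |
        ∃ (m : ℕ) (p : Fin m → ℝ)
          (ρ : Fin m → Matrix (Σ k, d k × e k) (Σ k, d k × e k) ℂ),
          (∀ x, 0 ≤ p x) ∧ (∑ x, p x = 1) ∧
          (∀ x, (ρ x).PosSemidef) ∧ (∀ x, (ρ x).trace = 1) ∧
          r = vNEntropy (periphProj d e ω (∑ x, p x • ρ x))
              - ∑ x, p x * vNEntropy (periphProj d e ω (ρ x)) }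
      (Real.log (∑ k, (Fintype.card (d k) : ℝ))) := by
  classical
  -- notation
  have hTne : Nonempty (Σ k, d k) := ⟨⟨Classical.arbitrary K, Classical.arbitrary _⟩⟩
  set m₀ : ℕ := Fintype.card (Σ k, d k) with hm₀
  have hm₀pos : 0 < m₀ := Fintype.card_pos
  have hm₀R : (0 : ℝ) < (m₀ : ℝ) := by exact_mod_cast hm₀pos
  have hcard : ((m₀ : ℝ)) = ∑ k, (Fintype.card (d k) : ℝ) := by
    rw [hm₀, Fintype.card_sigma]
    push_cast
    rfl
  -- spectral data of ω
  have hωh : ∀ k, (ω k).IsHermitian := fun k => (hω k).1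
  set W : ∀ k, Matrix (e k) (e k) ℂ := fun k => ((hωh k).eigenvectorUnitary : Matrix (e k) (e k) ℂ)
    with hWdef
  have hWmem : ∀ k, W k ∈ Matrix.unitaryGroup (e k) ℂ := fun k => ((hωh k).eigenvectorUnitary).2
  set ν : ∀ k, e k → ℝ := fun k => (hωh k).eigenvalues with hνdef
  have hWdec : ∀ k, ω k = W k * Matrix.diagonal (fun b => ((ν k b : ℝ) : ℂ)) * (W k)ᴴ :=
    fun k => (hωh k).spectral_theorem
  have hν1 : ∀ k, ∑ b, ν k b = 1 := by
    intro k
    have h := (hωtr k)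
    rw [hWdec k, trace_unitary_conj (W k) (hWmem k)] at h
    exact_mod_cast h
  set hνS : K → ℝ := fun k => ∑ b, Real.negMulLog (ν k b) with hνSdef
  constructor
  · -- upper bound
    rintro r ⟨m, p, ρ, hp, hp1, hpsd, htr, rfl⟩
    set ρbar := ∑ x, p x • ρ x with hρbar
    have hbarpsd : ρbar.PosSemidef :=
      posSemidef_sum _ _ fun x _ => posSemidef_smul_real (hpsd x) (hp x)
    have hσx : ∀ (x : Fin m) (k : K), (pTr d e (ρ x) k).PosSemidef :=
      fun x k => pTr_posSemidef d e (hpsd x) k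
    have hσb : ∀ k, (pTr d e ρbar k).PosSemidef := fun k => pTr_posSemidef d e hbarpsd k
    -- eigen decompositions
    set μx : ∀ (x : Fin m) (k : K), d k → ℝ := fun x k => (hσx x k).1.eigenvalues with hμxdef
    set μb : ∀ k, d k → ℝ := fun k => (hσb k).1.eigenvalues with hμbdef
    have hdecx : ∀ x k, pTr d e (ρ x) k
        = ((hσx x k).1.eigenvectorUnitary : Matrix (d k) (d k) ℂ)
          * Matrix.diagonal (fun a => ((μx x k a : ℝ) : ℂ))
          * ((hσx x k).1.eigenvectorUnitary : Matrix (d k) (d k) ℂ)ᴴ :=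
      fun x k => (hσx x k).1.spectral_theorem
    have hdecb : ∀ k, pTr d e ρbar k
        = ((hσb k).1.eigenvectorUnitary : Matrix (d k) (d k) ℂ)
          * Matrix.diagonal (fun a => ((μb k a : ℝ) : ℂ))
          * ((hσb k).1.eigenvectorUnitary : Matrix (d k) (d k) ℂ)ᴴ :=
      fun k => (hσb k).1.spectral_theorem
    -- entropies
    have hvNb : vNEntropy (periphProj d e ω ρbar)
        = ∑ k, ∑ a, ∑ b, Real.negMulLog (μb k a * ν k b) :=
      vN_periphProj d e ω ρbar _ (fun k => ((hσb k).1.eigenvectorUnitary).2) μb hdecb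
        W hWmem ν hWdec
    have hvNx : ∀ x, vNEntropy (periphProj d e ω (ρ x))
        = ∑ k, ∑ a, ∑ b, Real.negMulLog (μx x k a * ν k b) :=
      fun x => vN_periphProj d e ω (ρ x) _ (fun k => ((hσx x k).1.eigenvectorUnitary).2)
        (μx x) (hdecx x) W hWmem ν hWdec
    -- q values
    set qx : Fin m → K → ℝ := fun x k => ∑ a, μx x k a with hqxdef
    set qb : K → ℝ := fun k => ∑ a, μb k a with hqbdef
    have hqxtr : ∀ x k, qx x k = (Matrix.trace (pTr d e (ρ x) k)).re := by
      intro x k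
      rw [hdecx x k, re_trace_unitary_conj _ ((hσx x k).1.eigenvectorUnitary).2]
    have hqbtr : ∀ k, qb k = (Matrix.trace (pTr d e ρbar k)).re := by
      intro k
      rw [hdecb k, re_trace_unitary_conj _ ((hσb k).1.eigenvectorUnitary).2]
    have hqmix : ∀ k, qb k = ∑ x, p x * qx x k := by
      intro k
      rw [hqbtr k, hρbar, pTr_sum_smul d e p ρ k, Matrix.trace_sum, Complex.re_sum]
      refine Finset.sum_congr rfl fun x _ => ?_
      rw [Matrix.trace_smul, Complex.smul_re, hqxtr x k, smul_eq_mul]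
    have hqx0 : ∀ x k, 0 ≤ qx x k :=
      fun x k => Finset.sum_nonneg fun a _ => (hσx x k).eigenvalues_nonneg a
    have hqxsum : ∀ x, ∑ k, qx x k = 1 := by
      intro x
      have h := sum_trace_pTr d e (ρ x)
      rw [htr x] at h
      have h2 : (∑ k, Matrix.trace (pTr d e (ρ x) k)).re = 1 := by rw [h]; simp
      rw [Complex.re_sum] at h2
      rw [← h2]
      exact Finset.sum_congr rfl fun k _ => hqxtr x k
    have hqbsum : ∑ k, qb k = 1 := by
      have h := sum_trace_pTr d e ρbar
      have hbtr : ρbar.trace = 1 := by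
        rw [hρbar, Matrix.trace_sum]
        have : ∀ x : Fin m, (p x • ρ x).trace = ((p x : ℝ) : ℂ) := by
          intro x
          rw [Matrix.trace_smul, htr x, Complex.real_smul, mul_one]
        rw [Finset.sum_congr rfl fun x _ => this x, ← Complex.ofReal_sum, hp1,
          Complex.ofReal_one]
      rw [hbtr] at h
      have h2 : (∑ k, Matrix.trace (pTr d e ρbar k)).re = 1 := by rw [h]; simp
      rw [Complex.re_sum] at h2
      rw [← h2]
      exact Finset.sum_congr rfl fun k _ => hqbtr k
    -- expand
    have hvNb' : vNEntropy (periphProj d e ω ρbar)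
        = ∑ k, (∑ a, Real.negMulLog (μb k a) + qb k * hνS k) := by
      rw [hvNb]
      exact Finset.sum_congr rfl fun k _ => expand_sum_negMulLog (μb k) (ν k) (hν1 k)
    have hvNx' : ∀ x, vNEntropy (periphProj d e ω (ρ x))
        = ∑ k, (∑ a, Real.negMulLog (μx x k a) + qx x k * hνS k) := by
      intro x
      rw [hvNx x]
      exact Finset.sum_congr rfl fun k _ => expand_sum_negMulLog (μx x k) (ν k) (hν1 k)
    rw [hvNb']
    rw [Finset.sum_congr rfl fun x _ => congrArg (p x * ·) (hvNx' x)]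
    -- algebraic rearrangement
    have hre : ∑ k, (∑ a, Real.negMulLog (μb k a) + qb k * hνS k)
        - ∑ x, p x * ∑ k, (∑ a, Real.negMulLog (μx x k a) + qx x k * hνS k)
        = ∑ k, ∑ a, Real.negMulLog (μb k a)
          - ∑ x, p x * ∑ k, ∑ a, Real.negMulLog (μx x k a) := by
      rw [Finset.sum_add_distrib]
      have h3 : ∀ x, p x * ∑ k, (∑ a, Real.negMulLog (μx x k a) + qx x k * hνS k)
          = p x * ∑ k, ∑ a, Real.negMulLog (μx x k a)
            + ∑ k, p x * (qx x k * hνS k) := by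
        intro x
        rw [Finset.sum_add_distrib, mul_add]
        congr 1
        exact Finset.mul_sum _ _ _
      rw [Finset.sum_congr rfl fun x _ => h3 x, Finset.sum_add_distrib]
      have h4 : ∑ x, ∑ k, p x * (qx x k * hνS k) = ∑ k, qb k * hνS k := by
        rw [Finset.sum_comm]
        refine Finset.sum_congr rfl fun k _ => ?_
        rw [hqmix k, Finset.sum_mul]
        exact Finset.sum_congr rfl fun x _ => by ring
      rw [h4]
      ring
    rw [hre]
    -- bound
    have hb1 : ∑ k, ∑ a, Real.negMulLog (μb k a)
        - ∑ x, p x * ∑ k, ∑ a, Real.negMulLog (μx x k a)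
        ≤ ∑ k, ∑ a, Real.negMulLog (μb k a) := by
      have : 0 ≤ ∑ x, p x * ∑ k, ∑ a, Real.negMulLog (μx x k a) := by
        refine Finset.sum_nonneg fun x _ => mul_nonneg (hp x) ?_
        refine Finset.sum_nonneg fun k _ => Finset.sum_nonneg fun a _ => ?_
        refine Real.negMulLog_nonneg ((hσx x k).eigenvalues_nonneg a) ?_
        calc μx x k a ≤ qx x k :=
              Finset.single_le_sum (f := fun a => μx x k a)
                (fun a _ => (hσx x k).eigenvalues_nonneg a) (Finset.mem_univ a)
          _ ≤ ∑ k', qx x k' :=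
              Finset.single_le_sum (f := fun k => qx x k) (fun k _ => hqx0 x k)
                (Finset.mem_univ k)
          _ = 1 := hqxsum x
      linarith
    refine hb1.trans ?_
    have hb2 : ∑ k, ∑ a, Real.negMulLog (μb k a)
        = ∑ t : Σ k, d k, Real.negMulLog (μb t.1 t.2) := by
      rw [← Finset.univ_sigma_univ, Finset.sum_sigma]
    have hb3 : ∑ t : Σ k, d k, μb t.1 t.2 = 1 := by
      rw [← Finset.univ_sigma_univ, Finset.sum_sigma]
      exact hqbsum
    rw [hb2, ← hcard]
    exact sum_negMulLog_le_log_card _ (fun t => (hσb t.1).eigenvalues_nonneg t.2) hb3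
  · -- least upper bound: the value is attained
    intro c hc
    refine hc ?_
    set b₀ : ∀ k, e k := fun k => Classical.arbitrary (e k) with hb₀
    set eqT : Fin m₀ ≃ (Σ k, d k) := (Fintype.equivFin (Σ k, d k)).symm with heqT
    refine ⟨m₀, fun _ => ((m₀ : ℝ))⁻¹,
      fun x => pureAt d e ⟨(eqT x).1, ((eqT x).2, b₀ (eqT x).1)⟩,
      fun _ => by positivity, ?_, fun x => pureAt_posSemidef d e _,
      fun x => pureAt_trace d e _, ?_⟩
    · show ∑ _x : Fin m₀, ((m₀ : ℝ))⁻¹ = 1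
      rw [Finset.sum_const, Finset.card_univ, Fintype.card_fin, nsmul_eq_mul,
        mul_inv_cancel₀ (ne_of_gt hm₀R)]
    -- value computation
    have hmix : (∑ x : Fin m₀, ((m₀ : ℝ))⁻¹ • pureAt d e ⟨(eqT x).1, ((eqT x).2, b₀ (eqT x).1)⟩)
        = ∑ t : Σ k, d k, ((m₀ : ℝ))⁻¹ • pureAt d e ⟨t.1, (t.2, b₀ t.1)⟩ :=
      Equiv.sum_comp eqT (fun t => ((m₀ : ℝ))⁻¹ • pureAt d e ⟨t.1, (t.2, b₀ t.1)⟩)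
    have hbar : ∀ k, pTr d e
        (∑ x : Fin m₀, ((m₀ : ℝ))⁻¹ • pureAt d e ⟨(eqT x).1, ((eqT x).2, b₀ (eqT x).1)⟩) k
        = Matrix.diagonal (fun _ : d k => ((((m₀ : ℝ))⁻¹ : ℝ) : ℂ)) := by
      intro k
      rw [hmix]
      exact pTr_mix d e b₀ _ k
    have hvNbar : vNEntropy (periphProj d e ω
        (∑ x : Fin m₀, ((m₀ : ℝ))⁻¹ • pureAt d e ⟨(eqT x).1, ((eqT x).2, b₀ (eqT x).1)⟩))
        = ∑ k, ∑ _a : d k, ∑ b, Real.negMulLog (((m₀ : ℝ))⁻¹ * ν k b) := by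
      refine vN_periphProj d e ω _ (fun k => (1 : Matrix (d k) (d k) ℂ))
        (fun k => one_mem _) (fun k _ => ((m₀ : ℝ))⁻¹) ?_ W hWmem ν hWdec
      intro k
      rw [hbar k]
      simp
    have hvNx : ∀ x : Fin m₀, vNEntropy (periphProj d e ω
        (pureAt d e ⟨(eqT x).1, ((eqT x).2, b₀ (eqT x).1)⟩)) = hνS (eqT x).1 := by
      intro x
      set t := eqT x with ht
      have h1 : vNEntropy (periphProj d e ω (pureAt d e ⟨t.1, (t.2, b₀ t.1)⟩))
          = ∑ k, ∑ a, ∑ b, Real.negMulLog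
              ((if (⟨k, a⟩ : Σ k, d k) = t then (1 : ℝ) else 0) * ν k b) := by
        refine vN_periphProj d e ω _ (fun k => (1 : Matrix (d k) (d k) ℂ))
          (fun k => one_mem _)
          (fun k a => if (⟨k, a⟩ : Σ k, d k) = t then (1 : ℝ) else 0) ?_ W hWmem ν hWdec
        intro k
        rw [pTr_pureAt d e t b₀ k]
        simp
      rw [h1]
      have h2 : ∑ k, ∑ a, ∑ b, Real.negMulLog
            ((if (⟨k, a⟩ : Σ k, d k) = t then (1 : ℝ) else 0) * ν k b)
          = ∑ s : Σ k, d k, ∑ b, Real.negMulLog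
              ((if s = t then (1 : ℝ) else 0) * ν s.1 b) := by
        rw [← Finset.univ_sigma_univ, Finset.sum_sigma]
      rw [h2]
      rw [Finset.sum_eq_single_of_mem t (Finset.mem_univ t)]
      · simp [hνSdef]
      · intro s _ hs
        simp [hs, Real.negMulLog_zero]
    rw [Finset.sum_congr rfl fun x _ => congrArg (((m₀:ℝ))⁻¹ * ·) (hvNx x), hvNbar]
    -- simplify
    have h5 : ∀ k, ∑ _a : d k, ∑ b, Real.negMulLog (((m₀ : ℝ))⁻¹ * ν k b)
        = (Fintype.card (d k) : ℝ) * (Real.negMulLog ((m₀:ℝ))⁻¹ + ((m₀:ℝ))⁻¹ * hνS k) := by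
      intro k
      rw [Finset.sum_const, Finset.card_univ, nsmul_eq_mul]
      congr 1
      have h := expand_sum_negMulLog (fun _ : Unit => ((m₀:ℝ))⁻¹) (ν k) (hν1 k)
      simpa [hνSdef] using h
    rw [Finset.sum_congr rfl fun k _ => h5 k]
    have h6 : ∑ x : Fin m₀, ((m₀:ℝ))⁻¹ * hνS (eqT x).1
        = ∑ k, (Fintype.card (d k) : ℝ) * (((m₀:ℝ))⁻¹ * hνS k) := by
      rw [Equiv.sum_comp eqT (fun t => ((m₀:ℝ))⁻¹ * hνS t.1), ← Finset.univ_sigma_univ,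
        Finset.sum_sigma]
      refine Finset.sum_congr rfl fun k _ => ?_
      show (∑ _j : d k, ((m₀:ℝ))⁻¹ * hνS k) = _
      rw [Finset.sum_const, Finset.card_univ, nsmul_eq_mul]
    rw [h6]
    have h7 : Real.negMulLog (((m₀:ℝ))⁻¹) = ((m₀:ℝ))⁻¹ * Real.log (m₀:ℝ) := by
      rw [Real.negMulLog, Real.log_inv]; ring
    rw [Finset.sum_congr rfl fun k _ =>
      mul_add (Fintype.card (d k) : ℝ) (Real.negMulLog (((m₀:ℝ))⁻¹)) (((m₀:ℝ))⁻¹ * hνS k)]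
    rw [Finset.sum_add_distrib, add_sub_cancel_right, ← Finset.sum_mul, ← hcard, h7,
      ← mul_assoc, mul_inv_cancel₀ (ne_of_gt hm₀R), one_mul]
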